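/- Let G = (V,E,w) be a connected, locally finite weighted graph with edge weights w_e > 0, let x ∈ V be a fixed base vertex, and let u : V → ℝ be harmonic, meaning ∑_{(v,y) ∈ E} w_{vy}·(u(y) − u(v)) = 0 for every v ∈ V. Define the weighted in-degree d_in(v) = ∑_{(z,v) ∈ E, d(x,z)=d(x,v)−1} w_{zv} and weighted out-degree d_out(v) = ∑_{(v,z) ∈ E, d(x,z)=d(x,v)+1} w_{vz}. Then N(k) = ∑_{y : d(x,y)=k+1} d_in(y)·u(y)² − ∑_{y : d(x,y)=k} d_out(y)·u(y)² is non-negative and satisfies N(k+1) ≥ N(k) for every integer k ≥ 0. -/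

import Mathlib

/-- Weighted in-degree of `v` relative to base vertex `x`: the sum of the weights of
the edges joining `v` to neighbors at distance `d(x,v) − 1` from `x`. -/
noncomputable def dinw {V : Type*} (G : SimpleGraph V) (w : V → V → ℝ) (x v : V) : ℝ :=
  ∑ᶠ z ∈ {z | G.Adj v z ∧ G.dist x z = G.dist x v - 1}, w v z

/-- Weighted out-degree of `v` relative to base vertex `x`: the sum of the weights of
the edges joining `v` to neighbors at distance `d(x,v) + 1` from `x`. -/
noncomputable def doutw {V : Type*} (G : SimpleGraph V) (w : V → V → ℝ) (x v : V) : ℝ :=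
  ∑ᶠ z ∈ {z | G.Adj v z ∧ G.dist x z = G.dist x v + 1}, w v z

/-- The weighted discrete Almgren quantity `N(k)`. -/
noncomputable def almgrenNw {V : Type*} (G : SimpleGraph V) (w : V → V → ℝ) (x : V)
    (u : V → ℝ) (k : ℕ) : ℝ :=
  (∑ᶠ y ∈ {y | G.dist x y = k + 1}, dinw G w x y * u y ^ 2) -
    ∑ᶠ y ∈ {y | G.dist x y = k}, doutw G w x y * u y ^ 2


/-!
Since `u` is harmonic, `u²` is subharmonic:
`Δ(u²)(v) = 2 u(v) Δu(v) + ∑_{y ∼ v} w_{vy} (u(y) - u(v))² ≥ 0`.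
Summing `Δf` over the sphere `S_{k+1}` is a discrete divergence theorem: with `Φ(k)` the
outward flux of `f` through `S_k`, the edges inside `S_{k+1}` cancel by the symmetry of `w` and
the edges down to `S_k` contribute `-Φ(k)`, so the sum is `Φ(k+1) - Φ(k)`.
For `f = u²` the flux `Φ(k)` is `N(k)`, and `Φ(0) = Δ(u²)(x)`.
-/

open Finset

namespace SimpleGraph

variable {V : Type*} (G : SimpleGraph V)

theorem exists_adj_dist_eq_of_dist_eq_add_one {x y : V} {k : ℕ} (h : G.dist x y = k + 1) :
    ∃ z, G.Adj y z ∧ G.dist x z = k := by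
  obtain ⟨p, hp⟩ := G.exists_walk_of_dist_ne_zero (u := y) (v := x) (by rw [dist_comm]; omega)
  cases p with
  | nil => simp at h
  | @cons _ z _ hyz q =>
    refine ⟨z, hyz, ?_⟩
    have hq : G.dist z x ≤ k := by
      have := G.dist_le q
      rw [Walk.length_cons, dist_comm, h] at hp
      omega
    rw [dist_comm] at hq
    rcases hyz.diff_dist_adj (u := x) with h' | h' | h' <;> omega

variable [G.LocallyFinite]

noncomputable def weightedLaplacian (w : V → V → ℝ) (f : V → ℝ) (v : V) : ℝ :=
  ∑ y ∈ G.neighborFinset v, w v y * (f y - f v)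

theorem weightedLaplacian_sq (w : V → V → ℝ) (u : V → ℝ) (v : V) :
    G.weightedLaplacian w (fun y => u y ^ 2) v =
      2 * u v * G.weightedLaplacian w u v + ∑ y ∈ G.neighborFinset v, w v y * (u y - u v) ^ 2 := by
  simp only [weightedLaplacian, mul_sum, ← sum_add_distrib]
  exact sum_congr rfl fun y _ => by ring

theorem weightedLaplacian_sq_nonneg {w : V → V → ℝ}
    (hw : ∀ a b, G.Adj a b → 0 ≤ w a b) {u : V → ℝ} {v : V}
    (hu : G.weightedLaplacian w u v = 0) :
    0 ≤ G.weightedLaplacian w (fun y => u y ^ 2) v := by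
  rw [weightedLaplacian_sq, hu, mul_zero, zero_add]
  exact sum_nonneg fun y hy => mul_nonneg (hw v y ((G.mem_neighborFinset v y).1 hy)) (sq_nonneg _)

section Spheres

variable {G}

theorem Connected.finite_setOf_dist_eq (hconn : G.Connected) (x : V) (k : ℕ) :
    {y | G.dist x y = k}.Finite := by
  induction k with
  | zero =>
    refine (Set.finite_singleton x).subset fun y hy => ?_
    exact (hconn.dist_eq_zero_iff.1 hy).symm
  | succ k ih =>
    refine (ih.biUnion fun z _ => (G.neighborSet z).toFinite).subset fun y hy => ?_
    obtain ⟨z, hyz, hz⟩ := G.exists_adj_dist_eq_of_dist_eq_add_one hy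
    exact Set.mem_biUnion hz hyz.symm

variable (hconn : G.Connected) (x : V)

noncomputable def sphereFinset (k : ℕ) : Finset V :=
  (hconn.finite_setOf_dist_eq x k).toFinset

@[simp]
theorem mem_sphereFinset {k : ℕ} {y : V} : y ∈ sphereFinset hconn x k ↔ G.dist x y = k :=
  Set.Finite.mem_toFinset _

theorem sphereFinset_zero : sphereFinset hconn x 0 = {x} := by
  ext y
  rw [mem_sphereFinset, hconn.dist_eq_zero_iff, mem_singleton, eq_comm]

end Spheres

section Neighbors

variable (x : V)

noncomputable def outNbrs (v : V) : Finset V :=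
  (G.neighborFinset v).filter fun z => G.dist x z = G.dist x v + 1

noncomputable def levelNbrs (v : V) : Finset V :=
  (G.neighborFinset v).filter fun z => G.dist x z = G.dist x v

-- `+ 1` on the left avoids the truncated `dist x v - 1` of `dinw`, which is `0` at `v = x`.
noncomputable def inNbrs (v : V) : Finset V :=
  (G.neighborFinset v).filter fun z => G.dist x z + 1 = G.dist x v

variable {G x}

@[simp]
theorem mem_outNbrs {v z : V} : z ∈ G.outNbrs x v ↔ G.Adj v z ∧ G.dist x z = G.dist x v + 1 := by
  rw [outNbrs, mem_filter, mem_neighborFinset]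

@[simp]
theorem mem_levelNbrs {v z : V} : z ∈ G.levelNbrs x v ↔ G.Adj v z ∧ G.dist x z = G.dist x v := by
  rw [levelNbrs, mem_filter, mem_neighborFinset]

@[simp]
theorem mem_inNbrs {v z : V} : z ∈ G.inNbrs x v ↔ G.Adj v z ∧ G.dist x z + 1 = G.dist x v := by
  rw [inNbrs, mem_filter, mem_neighborFinset]

theorem sum_neighborFinset_eq_out_add_level_add_in {M : Type*} [AddCommMonoid M] (v : V)
    (g : V → M) :
    ∑ z ∈ G.neighborFinset v, g z =
      ∑ z ∈ G.outNbrs x v, g z + ∑ z ∈ G.levelNbrs x v, g z + ∑ z ∈ G.inNbrs x v, g z := by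
  simp only [outNbrs, levelNbrs, inNbrs, sum_filter, ← sum_add_distrib]
  refine sum_congr rfl fun z hz => ?_
  rcases ((G.mem_neighborFinset v z).1 hz).diff_dist_adj (u := x) with h | h | h <;>
    split_ifs <;> first | omega | simp

end Neighbors

section Flux

variable {G} (hconn : G.Connected) (x : V)

theorem sum_sphereFinset_inNbrs_comm {M : Type*} [AddCommMonoid M] (k : ℕ) (g : V → V → M) :
    ∑ v ∈ sphereFinset hconn x (k + 1), ∑ y ∈ G.inNbrs x v, g v y =
      ∑ y ∈ sphereFinset hconn x k, ∑ v ∈ G.outNbrs x y, g v y :=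
  sum_comm' fun v y => by
    simp only [mem_sphereFinset, mem_inNbrs, mem_outNbrs, G.adj_comm v y]
    grind

theorem sum_sphereFinset_levelNbrs_eq_zero (k : ℕ) {g : V → V → ℝ} (hg : ∀ v y, g y v = -g v y) :
    ∑ v ∈ sphereFinset hconn x k, ∑ y ∈ G.levelNbrs x v, g v y = 0 := by
  have hswap : ∑ v ∈ sphereFinset hconn x k, ∑ y ∈ G.levelNbrs x v, g v y =
      ∑ y ∈ sphereFinset hconn x k, ∑ v ∈ G.levelNbrs x y, g v y :=
    sum_comm' fun v y => by
      simp only [mem_sphereFinset, mem_levelNbrs, G.adj_comm v y]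
      grind
  have hneg : ∑ y ∈ sphereFinset hconn x k, ∑ v ∈ G.levelNbrs x y, g v y =
      -∑ v ∈ sphereFinset hconn x k, ∑ y ∈ G.levelNbrs x v, g v y := by
    simp only [← sum_neg_distrib]
    exact sum_congr rfl fun y _ => sum_congr rfl fun v _ => hg y v
  linarith [hswap.trans hneg]

noncomputable def sphereFlux (w : V → V → ℝ) (f : V → ℝ) (k : ℕ) : ℝ :=
  ∑ v ∈ sphereFinset hconn x k, ∑ y ∈ G.outNbrs x v, w v y * (f y - f v)

variable {x} {w : V → V → ℝ} {f : V → ℝ}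

theorem weightedLaplacian_eq_sphereFlux_zero :
    G.weightedLaplacian w f x = sphereFlux hconn x w f 0 := by
  rw [sphereFlux, sphereFinset_zero, sum_singleton, weightedLaplacian]
  congr 1
  ext z
  simp

theorem sum_sphereFinset_weightedLaplacian (hsymm : ∀ a b, w a b = w b a) (k : ℕ) :
    ∑ v ∈ sphereFinset hconn x (k + 1), G.weightedLaplacian w f v =
      sphereFlux hconn x w f (k + 1) - sphereFlux hconn x w f k := by
  simp only [weightedLaplacian, sum_neighborFinset_eq_out_add_level_add_in (x := x),
    sum_add_distrib, sum_sphereFinset_inNbrs_comm hconn x k, sphereFlux,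
    sum_sphereFinset_levelNbrs_eq_zero hconn x (k + 1) (g := fun v y => w v y * (f y - f v))
      fun v y => by rw [hsymm]; ring]
  rw [add_zero, sub_eq_add_neg, ← sum_neg_distrib]
  congr 1
  refine sum_congr rfl fun v _ => ?_
  rw [← sum_neg_distrib]
  exact sum_congr rfl fun y _ => by rw [hsymm]; ring

theorem monotone_sphereFlux (hsymm : ∀ a b, w a b = w b a)
    (hf : ∀ v, 0 ≤ G.weightedLaplacian w f v) : Monotone (sphereFlux hconn x w f) :=
  monotone_nat_of_le_succ fun k => sub_nonneg.1 <| by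
    rw [← sum_sphereFinset_weightedLaplacian hconn hsymm]
    exact sum_nonneg fun v _ => hf v

theorem sphereFlux_nonneg (hsymm : ∀ a b, w a b = w b a)
    (hf : ∀ v, 0 ≤ G.weightedLaplacian w f v) (k : ℕ) : 0 ≤ sphereFlux hconn x w f k :=
  calc 0 ≤ sphereFlux hconn x w f 0 := weightedLaplacian_eq_sphereFlux_zero hconn ▸ hf x
    _ ≤ sphereFlux hconn x w f k := monotone_sphereFlux hconn hsymm hf k.zero_le

end Flux

end SimpleGraph

open SimpleGraph

section Almgren

variable {V : Type*} {G : SimpleGraph V} [G.LocallyFinite] {w : V → V → ℝ} {x : V}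

theorem dinw_eq_sum_inNbrs {v : V} (hv : G.dist x v ≠ 0) :
    dinw G w x v = ∑ z ∈ G.inNbrs x v, w v z := by
  have hset : {z | G.Adj v z ∧ G.dist x z = G.dist x v - 1} = ↑(G.inNbrs x v) := by
    ext z
    rw [Set.mem_ofPred_eq, mem_coe, mem_inNbrs]
    exact and_congr_right fun _ => by omega
  rw [dinw, hset, finsum_mem_coe_finset]

theorem doutw_eq_sum_outNbrs (v : V) : doutw G w x v = ∑ z ∈ G.outNbrs x v, w v z := by
  have hset : {z | G.Adj v z ∧ G.dist x z = G.dist x v + 1} = ↑(G.outNbrs x v) := by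
    ext z
    rw [Set.mem_ofPred_eq, mem_coe, mem_outNbrs]
  rw [doutw, hset, finsum_mem_coe_finset]

theorem almgrenNw_eq_sphereFlux (hconn : G.Connected) (hsymm : ∀ a b, w a b = w b a)
    (u : V → ℝ) (k : ℕ) :
    almgrenNw G w x u k = sphereFlux hconn x w (fun y => u y ^ 2) k := by
  have hS : ∀ n, {y | G.dist x y = n} = ↑(sphereFinset hconn x n) :=
    fun n => (Set.Finite.coe_toFinset _).symm
  have hin : ∑ v ∈ sphereFinset hconn x (k + 1), dinw G w x v * u v ^ 2 =
      ∑ v ∈ sphereFinset hconn x k, ∑ y ∈ G.outNbrs x v, w v y * u y ^ 2 := by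
    rw [← sum_sphereFinset_inNbrs_comm hconn x k fun a b => w b a * u a ^ 2]
    refine sum_congr rfl fun v hv => ?_
    rw [dinw_eq_sum_inNbrs ((mem_sphereFinset hconn x).1 hv ▸ k.succ_ne_zero), sum_mul]
    exact sum_congr rfl fun y _ => by rw [hsymm]
  have hout : ∑ v ∈ sphereFinset hconn x k, doutw G w x v * u v ^ 2 =
      ∑ v ∈ sphereFinset hconn x k, ∑ y ∈ G.outNbrs x v, w v y * u v ^ 2 :=
    sum_congr rfl fun v _ => by rw [doutw_eq_sum_outNbrs, sum_mul]
  rw [almgrenNw, hS, hS, finsum_mem_coe_finset, finsum_mem_coe_finset, hin, hout, sphereFlux,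
    ← sum_sub_distrib]
  refine sum_congr rfl fun v _ => ?_
  rw [← sum_sub_distrib]
  exact sum_congr rfl fun y _ => by ring

end Almgren

/-- on a connected, locally finite weighted graph with positive symmetric
edge weights, for a weighted-harmonic `u` the weighted Almgren quantity `N(k)` is
non-negative and satisfies `N(k+1) ≥ N(k)` for every `k ≥ 0`. -/
theorem almgren_weighted {V : Type*} (G : SimpleGraph V) (hconn : G.Connected)
    (hlf : ∀ v : V, (G.neighborSet v).Finite) (w : V → V → ℝ)
    (hsymm : ∀ a b : V, w a b = w b a) (hpos : ∀ a b : V, G.Adj a b → 0 < w a b)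
    (x : V) (u : V → ℝ)
    (hu : ∀ v : V, ∑ᶠ y ∈ G.neighborSet v, w v y * (u y - u v) = 0) (k : ℕ) :
    0 ≤ almgrenNw G w x u k ∧ almgrenNw G w x u k ≤ almgrenNw G w x u (k + 1) := by
  let : G.LocallyFinite := fun v => (hlf v).fintype
  have harmonic : ∀ v, G.weightedLaplacian w u v = 0 := fun v => by
    rw [weightedLaplacian, ← finsum_mem_coe_finset, coe_neighborFinset]
    exact hu v
  have subharmonic : ∀ v, 0 ≤ G.weightedLaplacian w (fun y => u y ^ 2) v := fun v =>
    G.weightedLaplacian_sq_nonneg (fun a b hab => (hpos a b hab).le) (harmonic v)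
  simp only [almgrenNw_eq_sphereFlux hconn hsymm]
  exact ⟨sphereFlux_nonneg hconn hsymm subharmonic k,
    monotone_sphereFlux hconn hsymm subharmonic k.le_succ⟩
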